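/- arXiv:1210.8015 — 2 statements merged into one kernel-verified Lean document; each statement's English description precedes it below -/
import Mathlib

section
/- The skew Brownian motion density p(t,x,y) = (2πtσ²)^{-1/2}[exp(-(y-x)²/(2tσ²)) + q·sign(y)·exp(-(|y|+|x|)²/(2tσ²))] satisfies the Chapman–Kolmogorov equation: for all s, t > 0 and x, z ∈ ℝ, ∫_ℝ p(s,x,y) p(t,y,z) dy = p(s+t,x,z). -/
open Real MeasureTheory Filter Set Topology

noncomputable def sgn (y : ℝ) : ℝ := if 0 < y then 1 else if y < 0 then -1 else 0

/-- Transition density of one-dimensional skew Brownian motion. -/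
noncomputable def skewDensity (σ q t x y : ℝ) : ℝ :=
  (Real.sqrt (2 * Real.pi * t * σ ^ 2))⁻¹ *
    (Real.exp (-(y - x) ^ 2 / (2 * t * σ ^ 2)) +
      q * sgn y * Real.exp (-(|y| + |x|) ^ 2 / (2 * t * σ ^ 2)))

noncomputable def gk (σ τ u : ℝ) : ℝ :=
  (Real.sqrt (2 * Real.pi * τ * σ ^ 2))⁻¹ * Real.exp (-u ^ 2 / (2 * τ * σ ^ 2))

lemma gk_even (σ τ u : ℝ) : gk σ τ (-u) = gk σ τ u := by simp [gk]

lemma gk_pos {σ τ : ℝ} (hσ : 0 < σ) (hτ : 0 < τ) (u : ℝ) : 0 < gk σ τ u := by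
  unfold gk; positivity

lemma gk_mul {σ s t : ℝ} (hσ : 0 < σ) (hs : 0 < s) (ht : 0 < t) (a b y : ℝ) :
    gk σ s (y + a) * gk σ t (y + b)
      = gk σ (s + t) (a - b) * gk σ (s * t / (s + t)) (y + (t * a + s * b) / (s + t)) := by
  have hst : s + t ≠ 0 := by positivity
  have hσ' : σ ≠ 0 := ne_of_gt hσ
  unfold gk
  have e1 : Real.sqrt (2*π*s*σ^2) * Real.sqrt (2*π*t*σ^2)
      = Real.sqrt (2*π*(s+t)*σ^2) * Real.sqrt (2*π*(s*t/(s+t))*σ^2) := by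
    rw [← Real.sqrt_mul (by positivity), ← Real.sqrt_mul (by positivity)]
    congr 1; field_simp
  have e2 : Real.exp (-(y+a)^2/(2*s*σ^2)) * Real.exp (-(y+b)^2/(2*t*σ^2))
      = Real.exp (-(a-b)^2/(2*(s+t)*σ^2))
        * Real.exp (-(y+(t*a+s*b)/(s+t))^2/(2*(s*t/(s+t))*σ^2)) := by
    rw [← Real.exp_add, ← Real.exp_add]
    congr 1; field_simp; ring
  rw [mul_mul_mul_comm, ← mul_inv, e1, e2, mul_inv, ← mul_mul_mul_comm]

lemma gk_exp_eq (σ τ u : ℝ) : Real.exp (-u ^ 2 / (2 * τ * σ ^ 2))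
    = Real.exp (-(2 * τ * σ ^ 2)⁻¹ * u ^ 2) := by
  congr 1; rw [neg_div, div_eq_mul_inv, neg_mul, mul_comm]

lemma gk_integrable {σ τ : ℝ} (hσ : 0 < σ) (hτ : 0 < τ) (a : ℝ) :
    Integrable (fun y : ℝ => gk σ τ (y + a)) := by
  have h : Integrable (fun y : ℝ => gk σ τ y) := by
    unfold gk
    refine Integrable.const_mul ?_ _
    simp_rw [gk_exp_eq]
    exact integrable_exp_neg_mul_sq (by positivity)
  exact h.comp_add_right a

lemma gk_integral {σ τ : ℝ} (hσ : 0 < σ) (hτ : 0 < τ) (a : ℝ) :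
    ∫ y : ℝ, gk σ τ (y + a) = 1 := by
  rw [integral_add_right_eq_self (fun y : ℝ => gk σ τ y) a]
  unfold gk
  rw [integral_const_mul]
  simp_rw [gk_exp_eq]
  rw [integral_gaussian]
  rw [show π / (2 * τ * σ ^ 2)⁻¹ = π * (2 * τ * σ ^ 2) by field_simp]
  rw [inv_mul_eq_one₀]
  · congr 1; ring
  · positivity

lemma gk_conv {σ s t : ℝ} (hσ : 0 < σ) (hs : 0 < s) (ht : 0 < t) (a b : ℝ) :
    ∫ y : ℝ, gk σ s (y + a) * gk σ t (y + b) = gk σ (s + t) (a - b) := by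
  simp_rw [gk_mul hσ hs ht]
  rw [integral_const_mul, gk_integral hσ (by positivity), mul_one]

lemma gk_gg_integrable {σ s t : ℝ} (hσ : 0 < σ) (hs : 0 < s) (ht : 0 < t) (a b : ℝ) :
    Integrable (fun y : ℝ => gk σ s (y + a) * gk σ t (y + b)) := by
  simp_rw [gk_mul hσ hs ht]
  exact (gk_integrable hσ (by positivity) _).const_mul _

lemma reflect (h : ℝ → ℝ) (hi : Integrable h) :
    ∫ y : ℝ, h y = ∫ y in Ioi (0:ℝ), (h y + h (-y)) := by
  have h2 : ∫ y in Iic (0:ℝ), h y = ∫ y in Ioi (0:ℝ), h (-y) := by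
    rw [integral_comp_neg_Ioi]; norm_num
  rw [← intervalIntegral.integral_Iic_add_Ioi (b := (0:ℝ)) hi.integrableOn hi.integrableOn, h2,
    ← integral_add (hi.comp_neg).integrableOn hi.integrableOn]
  congr 1; funext y; ring

lemma gk_pair {σ s t : ℝ} (hσ : 0 < σ) (hs : 0 < s) (ht : 0 < t) (a b : ℝ) :
    (∫ y in Ioi (0:ℝ), gk σ s (y + a) * gk σ t (y + -b))
      + (∫ y in Ioi (0:ℝ), gk σ s (y + -a) * gk σ t (y + b))
      = gk σ (s + t) (a + b) := by
  have hi := gk_gg_integrable hσ hs ht a (-b)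
  have h := reflect _ hi
  rw [gk_conv hσ hs ht a (-b), sub_neg_eq_add] at h
  rw [h, integral_add hi.integrableOn hi.comp_neg.integrableOn]
  congr 1
  refine setIntegral_congr_fun measurableSet_Ioi fun y _ => ?_
  rw [show -y + a = -(y + -a) by ring, show -y + -b = -(y + b) by ring, gk_even, gk_even]

lemma sgn_abs_le (y : ℝ) : |sgn y| ≤ 1 := by
  unfold sgn; split_ifs <;> norm_num

lemma sgn_measurable : Measurable sgn := by
  unfold sgn
  exact Measurable.ite (measurableSet_lt measurable_const measurable_id)
    measurable_const (Measurable.ite (measurableSet_lt measurable_id measurable_const)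
      measurable_const measurable_const)

lemma skew_eq (σ q t x y : ℝ) : skewDensity σ q t x y
    = gk σ t (y - x) + q * sgn y * gk σ t (|y| + |x|) := by
  unfold skewDensity gk; ring

lemma gk_cont (σ τ : ℝ) : Continuous (gk σ τ) := by
  unfold gk; fun_prop

theorem skewDensity_chapman_kolmogorov (σ q : ℝ) (hσ : 0 < σ)
    (hq : q ∈ Set.Icc (-1 : ℝ) 1) (s t : ℝ) (hs : 0 < s) (ht : 0 < t) (x z : ℝ) :
    ∫ y : ℝ, skewDensity σ q s x y * skewDensity σ q t y z
      = skewDensity σ q (s + t) x z := by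
  obtain ⟨hq1, hq2⟩ := hq
  have hqabs : |q| ≤ 1 := abs_le.2 ⟨hq1, hq2⟩
  set f : ℝ → ℝ := fun y => skewDensity σ q s x y * skewDensity σ q t y z with hfdef
  -- measurability
  have m1 : Measurable fun y : ℝ => skewDensity σ q s x y := by
    simp only [skew_eq]
    exact ((gk_cont σ s).measurable.comp (measurable_id.sub measurable_const)).add
      ((measurable_const.mul sgn_measurable).mul
        ((gk_cont σ s).measurable.comp (measurable_id.abs.add measurable_const)))
  have m2 : Measurable fun y : ℝ => skewDensity σ q t y z := by
    simp only [skew_eq]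
    exact ((gk_cont σ t).measurable.comp (measurable_const.sub measurable_id)).add
      (measurable_const.mul
        ((gk_cont σ t).measurable.comp (measurable_const.add measurable_id.abs)))
  -- pointwise bound
  set P : ℝ → ℝ := fun y => gk σ s (y + -x) + gk σ s (y + |x|) + gk σ s (y + -|x|) with hP
  set Q : ℝ → ℝ := fun y => gk σ t (y + -z) + gk σ t (y + |z|) + gk σ t (y + -|z|) with hQ
  have habs : ∀ τ x' : ℝ, 0 < τ → ∀ y : ℝ,
      gk σ τ (|y| + |x'|) ≤ gk σ τ (y + |x'|) + gk σ τ (y + -|x'|) := by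
    intro τ x' hτ y
    rcases le_or_gt 0 y with h | h
    · rw [abs_of_nonneg h]
      have := gk_pos hσ hτ (y + -|x'|); linarith
    · rw [abs_of_neg h, show -y + |x'| = -(y + -|x'|) by ring, gk_even]
      have := gk_pos hσ hτ (y + |x'|); linarith
  have hb1 : ∀ y : ℝ, |skewDensity σ q s x y| ≤ P y := by
    intro y
    rw [skew_eq]
    calc |gk σ s (y - x) + q * sgn y * gk σ s (|y| + |x|)|
        ≤ |gk σ s (y - x)| + |q * sgn y| * |gk σ s (|y| + |x|)| := by
          refine (abs_add_le _ _).trans ?_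
          rw [abs_mul]
      _ ≤ gk σ s (y - x) + 1 * gk σ s (|y| + |x|) := by
          have p1 := gk_pos hσ hs (y - x)
          have p2 := gk_pos hσ hs (|y| + |x|)
          have : |q * sgn y| ≤ 1 := by
            rw [abs_mul]
            exact mul_le_one₀ hqabs (abs_nonneg _) (sgn_abs_le y)
          rw [abs_of_pos p1, abs_of_pos p2]
          nlinarith
      _ ≤ P y := by
          rw [one_mul, hP, show y - x = y + -x by ring]
          have := habs s x hs y
          simp only
          linarith
  have hb2 : ∀ y : ℝ, |skewDensity σ q t y z| ≤ Q y := by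
    intro y
    rw [skew_eq]
    calc |gk σ t (z - y) + q * sgn z * gk σ t (|z| + |y|)|
        ≤ |gk σ t (z - y)| + |q * sgn z| * |gk σ t (|z| + |y|)| := by
          refine (abs_add_le _ _).trans ?_
          rw [abs_mul]
      _ ≤ gk σ t (z - y) + 1 * gk σ t (|z| + |y|) := by
          have p1 := gk_pos hσ ht (z - y)
          have p2 := gk_pos hσ ht (|z| + |y|)
          have : |q * sgn z| ≤ 1 := by
            rw [abs_mul]
            exact mul_le_one₀ hqabs (abs_nonneg _) (sgn_abs_le z)
          rw [abs_of_pos p1, abs_of_pos p2]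
          nlinarith
      _ ≤ Q y := by
          rw [one_mul, hQ, show z - y = -(y + -z) by ring, gk_even,
            show |z| + |y| = |y| + |z| by ring]
          have := habs t z ht y
          simp only
          linarith
  have hPpos : ∀ y, 0 ≤ P y := by
    intro y
    have := gk_pos hσ hs (y + -x); have := gk_pos hσ hs (y + |x|)
    have := gk_pos hσ hs (y + -|x|); simp only [hP]; linarith
  have hQpos : ∀ y, 0 ≤ Q y := by
    intro y
    have := gk_pos hσ ht (y + -z); have := gk_pos hσ ht (y + |z|)
    have := gk_pos hσ ht (y + -|z|); simp only [hQ]; linarith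
  have hG : Integrable (fun y => P y * Q y) := by
    have heq : (fun y => P y * Q y) = fun y =>
        gk σ s (y + -x) * gk σ t (y + -z) + gk σ s (y + -x) * gk σ t (y + |z|)
        + gk σ s (y + -x) * gk σ t (y + -|z|)
        + gk σ s (y + |x|) * gk σ t (y + -z) + gk σ s (y + |x|) * gk σ t (y + |z|)
        + gk σ s (y + |x|) * gk σ t (y + -|z|)
        + gk σ s (y + -|x|) * gk σ t (y + -z) + gk σ s (y + -|x|) * gk σ t (y + |z|)
        + gk σ s (y + -|x|) * gk σ t (y + -|z|) := by
      funext y; simp only [hP, hQ]; ring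
    rw [heq]
    have J := fun a b => gk_gg_integrable hσ hs ht a b
    exact ((((((((J _ _).add (J _ _)).add (J _ _)).add (J _ _)).add (J _ _)).add
      (J _ _)).add (J _ _)).add (J _ _)).add (J _ _)
  have hfint : Integrable f := by
    refine hG.mono' (m1.mul m2).aestronglyMeasurable (ae_of_all _ fun y => ?_)
    rw [Real.norm_eq_abs, hfdef]
    simp only
    rw [abs_mul]
    exact mul_le_mul (hb1 y) (hb2 y) (abs_nonneg _) (hPpos y)
  rw [reflect f hfint]
  have hE : Set.EqOn (fun y => f y + f (-y)) (fun y =>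
      gk σ s (y + -x) * gk σ t (y + -z) + gk σ s (y + x) * gk σ t (y + z)
      + q * sgn z * (gk σ s (y + -x) * gk σ t (y + |z|))
      + q * sgn z * (gk σ s (y + x) * gk σ t (y + |z|))
      + q * (gk σ s (y + |x|) * gk σ t (y + -z))
      - q * (gk σ s (y + |x|) * gk σ t (y + z))) (Ioi 0) := by
    intro y hy
    have hy' : (0:ℝ) < y := hy
    simp only [hfdef, skew_eq]
    rw [show sgn y = 1 from by unfold sgn; rw [if_pos hy'],
        show sgn (-y) = -1 from by
          unfold sgn; rw [if_neg (by linarith), if_pos (by linarith)],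
        abs_neg y, abs_of_pos hy',
        show y - x = y + -x by ring,
        show z - y = -(y + -z) by ring, gk_even,
        show -y - x = -(y + x) by ring, gk_even,
        show z - -y = y + z by ring,
        add_comm |z| y]
    ring
  rw [setIntegral_congr_fun measurableSet_Ioi hE]
  have J : ∀ a b : ℝ, IntegrableOn (fun y => gk σ s (y + a) * gk σ t (y + b)) (Ioi 0) :=
    fun a b => (gk_gg_integrable hσ hs ht a b).integrableOn
  have hC : IntegrableOn (fun y => q * sgn z * (gk σ s (y + -x) * gk σ t (y + |z|))) (Ioi 0) :=
    (J (-x) |z|).const_mul (q * sgn z)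
  have hD : IntegrableOn (fun y => q * sgn z * (gk σ s (y + x) * gk σ t (y + |z|))) (Ioi 0) :=
    (J x |z|).const_mul (q * sgn z)
  have hEE : IntegrableOn (fun y => q * (gk σ s (y + |x|) * gk σ t (y + -z))) (Ioi 0) :=
    (J |x| (-z)).const_mul q
  have hF : IntegrableOn (fun y => q * (gk σ s (y + |x|) * gk σ t (y + z))) (Ioi 0) :=
    (J |x| z).const_mul q
  have hAB : IntegrableOn (fun y =>
      gk σ s (y + -x) * gk σ t (y + -z) + gk σ s (y + x) * gk σ t (y + z)) (Ioi 0) :=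
    (J (-x) (-z)).add (J x z)
  have hABC : IntegrableOn (fun y =>
      gk σ s (y + -x) * gk σ t (y + -z) + gk σ s (y + x) * gk σ t (y + z)
      + q * sgn z * (gk σ s (y + -x) * gk σ t (y + |z|))) (Ioi 0) := hAB.add hC
  have hABCD : IntegrableOn (fun y =>
      gk σ s (y + -x) * gk σ t (y + -z) + gk σ s (y + x) * gk σ t (y + z)
      + q * sgn z * (gk σ s (y + -x) * gk σ t (y + |z|))
      + q * sgn z * (gk σ s (y + x) * gk σ t (y + |z|))) (Ioi 0) := hABC.add hD
  have hABCDE : IntegrableOn (fun y =>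
      gk σ s (y + -x) * gk σ t (y + -z) + gk σ s (y + x) * gk σ t (y + z)
      + q * sgn z * (gk σ s (y + -x) * gk σ t (y + |z|))
      + q * sgn z * (gk σ s (y + x) * gk σ t (y + |z|))
      + q * (gk σ s (y + |x|) * gk σ t (y + -z))) (Ioi 0) := hABCD.add hEE
  rw [integral_sub hABCDE hF, integral_add hABCD hEE, integral_add hABC hD,
    integral_add hAB hC, integral_add (J (-x) (-z)) (J x z)]
  simp only [integral_const_mul]
  rw [skew_eq]
  have pairA := gk_pair hσ hs ht (-x) z
  simp only [neg_neg] at pairA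
  rw [show gk σ (s+t) (-x + z) = gk σ (s+t) (z - x) from by
    rw [show -x + z = z - x by ring]] at pairA
  rcases lt_trichotomy (0:ℝ) z with hz | hz | hz
  · rw [show sgn z = 1 from by unfold sgn; rw [if_pos hz], abs_of_pos hz]
    rcases le_or_gt 0 x with hx | hx
    · rw [abs_of_nonneg hx, show z + x = x + z by ring]
      have pairB := gk_pair hσ hs ht x z
      linear_combination pairA + q * pairB
    · rw [abs_of_neg hx,
        show gk σ (s+t) (z + -x) = gk σ (s+t) (z - x) from by
          rw [show z + -x = z - x by ring]]
      linear_combination (1 + q) * pairA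
  · subst hz
    rw [show sgn (0:ℝ) = 0 from by unfold sgn; norm_num]
    simp only [neg_zero, abs_zero] at pairA ⊢
    rw [show gk σ (s+t) (0 - x) = gk σ (s+t) (-x + 0) from by
      rw [show (0:ℝ) - x = -x + 0 by ring]] at pairA ⊢
    linear_combination pairA
  · rw [show sgn z = -1 from by
      unfold sgn; rw [if_neg (by linarith), if_pos hz], abs_of_neg hz]
    rcases le_or_gt 0 x with hx | hx
    · rw [abs_of_nonneg hx,
        show gk σ (s+t) (-z + x) = gk σ (s+t) (z - x) from by
          rw [show -z + x = -(z - x) by ring, gk_even]]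
      linear_combination (1 - q) * pairA
    · rw [abs_of_neg hx,
        show gk σ (s+t) (-z + -x) = gk σ (s+t) (x + z) from by
          rw [show -z + -x = -(x + z) by ring, gk_even]]
      have pairB := gk_pair hσ hs ht x z
      linear_combination pairA - q * pairB
end

section
/- Let u(t,x) = ∫_ℝ φ(y) p(t,x,y) dy where p is the 1-dimensional skew Brownian motion density with σ > 0, q ∈ [-1,1], and φ : ℝ → ℝ bounded continuous. Then for every x ∈ ℝ, lim_{t↓0} u(t,x) = φ(x). -/
open Real MeasureTheory Filter Set Topology

/-!
With `v = tσ²`, the skew density is the Gaussian density of `N(x, v)` plus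
`q · sign y · g_v(|y| + |x|)`, where `g_v` is the centred Gaussian density.
Since `N(x, v)` is the law of `x + √v Z` with `Z` standard normal, dominated convergence gives
`∫ φ dN(x, v) → φ x` as `v → 0`. The second kernel is odd, so `φ` may be replaced by
`φ - φ 0` in it; as `g_v(|y| + |x|) ≤ g_v(y)`, the correction is then at most
`|q| · ∫ |φ - φ 0| dN(0, v)`, which tends to `0` by the first step applied to `|φ - φ 0|` at `0`.
-/

open ProbabilityTheory
open scoped NNReal

lemma sgn_eq_sign : sgn = Real.sign := by
  ext y
  unfold sgn Real.sign
  split_ifs <;> first | rfl | linarith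

lemma Real.measurable_sign : Measurable Real.sign :=
  Measurable.ite measurableSet_Iio measurable_const <|
    Measurable.ite measurableSet_Ioi measurable_const measurable_const

lemma Real.abs_sign_le_one (y : ℝ) : |Real.sign y| ≤ 1 := by
  rcases Real.sign_apply_eq y with h | h | h <;> simp [h]

lemma abs_sub_le_of_forall_abs_le {f : ℝ → ℝ} {M : ℝ} (hM : ∀ y, |f y| ≤ M) (y z : ℝ) :
    |f y - f z| ≤ M + M :=
  (abs_sub _ _).trans (add_le_add (hM y) (hM z))

lemma integral_eq_zero_of_odd {f : ℝ → ℝ} (hf : ∀ y, f (-y) = -f y) : ∫ y, f y = 0 := by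
  have h := integral_neg_eq_self f volume
  simp_rw [hf, integral_neg] at h
  linarith

lemma gaussianReal_eq_map_const_add_mul (x : ℝ) (v : ℝ≥0) :
    gaussianReal x v = (gaussianReal 0 1).map (fun z => x + √v * z) := by
  have hmul : (gaussianReal 0 1).map (√v * ·) = gaussianReal 0 v := by
    rw [gaussianReal_map_const_mul, mul_zero, mul_one]
    congr
    exact Real.sq_sqrt v.2
  rw [← Function.comp_def (x + ·) (√v * ·), ← Measure.map_map (by fun_prop) (by fun_prop), hmul,
    gaussianReal_map_const_add, zero_add]

lemma tendsto_integral_gaussianReal_zero_var {f : ℝ → ℝ} (hf : Continuous f) {M : ℝ}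
    (hM : ∀ y, |f y| ≤ M) (x : ℝ) :
    Tendsto (fun v : ℝ≥0 => ∫ y, f y ∂gaussianReal x v) (𝓝 0) (𝓝 (f x)) := by
  have hsqrt : Tendsto (fun v : ℝ≥0 => √(v : ℝ)) (𝓝 0) (𝓝 0) := by
    simpa [Function.comp_def] using (continuous_sqrt.comp NNReal.continuous_coe).tendsto 0
  have hmap (v : ℝ≥0) : ∫ y, f y ∂gaussianReal x v = ∫ z, f (x + √v * z) ∂gaussianReal 0 1 := by
    rw [gaussianReal_eq_map_const_add_mul x v,
      integral_map (by fun_prop) hf.aestronglyMeasurable]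
  simp_rw [hmap]
  simpa using tendsto_integral_filter_of_norm_le_const (μ := gaussianReal 0 1) (l := 𝓝 0)
    (F := fun (v : ℝ≥0) z => f (x + √v * z)) (f := fun _ => f x)
    (Eventually.of_forall fun v => (by fun_prop : Continuous _).aestronglyMeasurable)
    ⟨M, Eventually.of_forall fun v => ae_of_all _ fun z => hM _⟩
    (ae_of_all _ fun z => (hf.tendsto x).comp (by
      simpa using tendsto_const_nhds.add (hsqrt.mul_const z)))

lemma gaussianPDFReal_abs_add_le (v : ℝ≥0) {a : ℝ} (ha : 0 ≤ a) (y : ℝ) :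
    gaussianPDFReal 0 v (|y| + a) ≤ gaussianPDFReal 0 v y := by
  simp only [gaussianPDFReal, sub_zero]
  gcongr ?_ * rexp (-?_ / _)
  nlinarith [abs_nonneg y, sq_abs y]

lemma integrable_sign_mul_gaussianPDFReal_abs_add (v : ℝ≥0) {a : ℝ} (ha : 0 ≤ a) :
    Integrable (fun y => Real.sign y * gaussianPDFReal 0 v (|y| + a)) := by
  have hk : Integrable (fun y => gaussianPDFReal 0 v (|y| + a)) :=
    (integrable_gaussianPDFReal 0 v).mono'
      ((measurable_gaussianPDFReal 0 v).comp (by fun_prop)).aestronglyMeasurable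
      (ae_of_all _ fun y => by
        rw [norm_of_nonneg (gaussianPDFReal_nonneg _ _ _)]
        exact gaussianPDFReal_abs_add_le v ha y)
  exact hk.bdd_mul Real.measurable_sign.aestronglyMeasurable
    (ae_of_all _ fun y => Real.abs_sign_le_one y)

lemma abs_integral_mul_sign_mul_gaussianPDFReal_le {f : ℝ → ℝ} (hf : Measurable f) {M : ℝ}
    (hM : ∀ y, |f y| ≤ M) {v : ℝ≥0} (hv : v ≠ 0) {a : ℝ} (ha : 0 ≤ a) :
    |∫ y, f y * (Real.sign y * gaussianPDFReal 0 v (|y| + a))|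
      ≤ ∫ y, |f y - f 0| ∂gaussianReal 0 v := by
  set k : ℝ → ℝ := fun y => Real.sign y * gaussianPDFReal 0 v (|y| + a)
  have hk := integrable_sign_mul_gaussianPDFReal_abs_add v ha
  have hk_odd : ∫ y, k y = 0 :=
    integral_eq_zero_of_odd fun y => by simp only [k, Real.sign_neg, abs_neg, neg_mul]
  have hfk : Integrable (fun y => f y * k y) :=
    hk.bdd_mul hf.aestronglyMeasurable (ae_of_all _ hM)
  calc |∫ y, f y * k y| = |∫ y, (f y - f 0) * k y| := by
        simp_rw [sub_mul]
        rw [integral_sub hfk (hk.const_mul _), integral_const_mul, hk_odd, mul_zero, sub_zero]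
    _ ≤ ∫ y, |f y - f 0| * gaussianPDFReal 0 v y := by
        have hbound : Integrable (fun y => |f y - f 0| * gaussianPDFReal 0 v y) :=
          (integrable_gaussianPDFReal 0 v).bdd_mul (by fun_prop) (ae_of_all _ fun y =>
            (abs_abs _).trans_le (abs_sub_le_of_forall_abs_le hM y 0))
        rw [← Real.norm_eq_abs]
        refine norm_integral_le_of_norm_le hbound (ae_of_all _ fun y => ?_)
        rw [norm_mul, norm_mul, Real.norm_eq_abs, Real.norm_eq_abs,
            Real.norm_of_nonneg (gaussianPDFReal_nonneg _ _ _)]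
        gcongr
        exact (mul_le_of_le_one_left (gaussianPDFReal_nonneg _ _ _)
          (Real.abs_sign_le_one y)).trans (gaussianPDFReal_abs_add_le v ha y)
    _ = ∫ y, |f y - f 0| ∂gaussianReal 0 v := by
        simp_rw [integral_gaussianReal_eq_integral_smul hv, smul_eq_mul, mul_comm]

lemma skewDensity_eq (σ q : ℝ) {t : ℝ} (ht : 0 ≤ t) (x y : ℝ) :
    skewDensity σ q t x y = gaussianPDFReal x (t * σ ^ 2).toNNReal y
      + q * (Real.sign y * gaussianPDFReal 0 (t * σ ^ 2).toNNReal (|y| + |x|)) := by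
  simp only [skewDensity, gaussianPDFReal, sgn_eq_sign, sub_zero,
    Real.coe_toNNReal (t * σ ^ 2) (by positivity)]
  ring_nf

lemma toNNReal_mul_sq_ne_zero {t σ : ℝ} (ht : 0 < t) (hσ : σ ≠ 0) : (t * σ ^ 2).toNNReal ≠ 0 :=
  (Real.toNNReal_pos.2 (by positivity)).ne'

lemma integral_mul_skewDensity {f : ℝ → ℝ} (hf : Measurable f) {M : ℝ} (hM : ∀ y, |f y| ≤ M)
    {σ : ℝ} (hσ : σ ≠ 0) (q : ℝ) {t : ℝ} (ht : 0 < t) (x : ℝ) :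
    ∫ y, f y * skewDensity σ q t x y = ∫ y, f y ∂gaussianReal x (t * σ ^ 2).toNNReal
      + q * ∫ y, f y * (Real.sign y * gaussianPDFReal 0 (t * σ ^ 2).toNNReal (|y| + |x|)) := by
  have hf_bound : ∀ᵐ y, ‖f y‖ ≤ M := ae_of_all _ hM
  simp_rw [skewDensity_eq σ q ht.le x, mul_add, mul_left_comm (f _) q]
  rw [integral_add ((integrable_gaussianPDFReal x _).bdd_mul hf.aestronglyMeasurable hf_bound)
      (((integrable_sign_mul_gaussianPDFReal_abs_add _ (abs_nonneg x)).bdd_mul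
        hf.aestronglyMeasurable hf_bound).const_mul q),
    integral_const_mul, integral_gaussianReal_eq_integral_smul (toNNReal_mul_sq_ne_zero ht hσ)]
  simp_rw [smul_eq_mul, mul_comm]

theorem initial_condition_general (σ q : ℝ) (hσ : 0 < σ)
    (φ : ℝ → ℝ) (hφc : Continuous φ) (hφb : ∃ M : ℝ, ∀ y, |φ y| ≤ M) (x : ℝ) :
    Tendsto (fun t : ℝ => ∫ y : ℝ, φ y * skewDensity σ q t x y)
      (nhdsWithin 0 (Set.Ioi 0)) (nhds (φ x)) := by
  obtain ⟨M, hM⟩ := hφb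
  set v : ℝ → ℝ≥0 := fun t => (t * σ ^ 2).toNNReal
  have hv : Tendsto v (𝓝[>] 0) (𝓝 0) := by
    simpa [v] using ((by fun_prop : Continuous v).tendsto 0).mono_left nhdsWithin_le_nhds
  have hgauss := (tendsto_integral_gaussianReal_zero_var hφc hM x).comp hv
  have hdev := (tendsto_integral_gaussianReal_zero_var (by fun_prop)
    (fun y => (abs_abs _).trans_le (abs_sub_le_of_forall_abs_le hM y 0)) 0).comp hv
  have hodd : Tendsto (fun t => q * ∫ y, φ y * (Real.sign y * gaussianPDFReal 0 (v t) (|y| + |x|)))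
      (𝓝[>] 0) (𝓝 0) := by
    refine squeeze_zero_norm' ?_ (by simpa using hdev.const_mul |q|)
    filter_upwards [self_mem_nhdsWithin] with t ht
    rw [norm_mul, Real.norm_eq_abs, Real.norm_eq_abs]
    gcongr
    exact abs_integral_mul_sign_mul_gaussianPDFReal_le hφc.measurable hM
      (toNNReal_mul_sq_ne_zero ht hσ.ne') (abs_nonneg x)
  have hsum := hgauss.add hodd
  rw [add_zero] at hsum
  refine hsum.congr' ?_
  filter_upwards [self_mem_nhdsWithin] with t ht
  exact (integral_mul_skewDensity hφc.measurable hM hσ.ne' q ht x).symm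

theorem initial_condition (σ q : ℝ) (hσ : 0 < σ) (hq : q ∈ Set.Icc (-1 : ℝ) 1)
    (φ : ℝ → ℝ) (hφc : Continuous φ) (hφb : ∃ M : ℝ, ∀ y, |φ y| ≤ M) (x : ℝ) :
    Tendsto (fun t : ℝ => ∫ y : ℝ, φ y * skewDensity σ q t x y)
      (nhdsWithin 0 (Set.Ioi 0)) (nhds (φ x)) :=
  initial_condition_general σ q hσ φ hφc hφb x
end
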